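/- Assume ζ(c) < 0 for all c ∈ [0,1). Then for every c ∈ [0,1), k(c)/(λ + θ) − (ψ′(γ(c))/ψ(γ(c))) · G(γ(c); c) < 0. (This quantity equals W_{cx}(γ(c), c) + 1 for the candidate value function W of the control problem, so the second-order smooth-fit condition W_{cx}(γ(c), c) = −1 fails at the repelling boundary γ.) -/
import Mathlib


open MeasureTheory Real Set Filter

/-- The (positive multiple of the) strictly increasing fundamental solution `ψ_λ` of the
Ornstein–Uhlenbeck equation `(1/2)σ² f'' + θ(μ - x) f' = λ f`, written as the integral
`ψ(x) = ∫₀^∞ t^(λ/θ - 1) exp(-t²/2 + a t (x - μ)) dt` with `a = √(2θ)/σ`. -/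
noncomputable def OUpsi (lam th mu sig : ℝ) (x : ℝ) : ℝ :=
  ∫ t in Set.Ioi (0:ℝ),
    t ^ (lam / th - 1) * Real.exp (-t ^ 2 / 2 + Real.sqrt (2 * th) / sig * t * (x - mu))

/-- `k(c) = λ + θ + λ Φ'(c)`. -/
noncomputable def kfun (lam th : ℝ) (Phi : ℝ → ℝ) (c : ℝ) : ℝ :=
  lam + th + lam * deriv Phi c

/-- `G(x; c) = μ(k(c) - θ)/λ + k(c)(x - μ)/(λ + θ)`. -/
noncomputable def Gfun (lam th mu : ℝ) (Phi : ℝ → ℝ) (x c : ℝ) : ℝ :=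
  mu * (kfun lam th Phi c - th) / lam + kfun lam th Phi c * (x - mu) / (lam + th)

/-- `ζ(c) = (λ+θ)(1-c) - λΦ(c)`. -/
noncomputable def zetafun (lam th : ℝ) (Phi : ℝ → ℝ) (c : ℝ) : ℝ :=
  (lam + th) * (1 - c) - lam * Phi c

/-- `x̄₀(c) = θμΦ(c)/ζ(c)`. -/
noncomputable def xbar0fun (lam th mu : ℝ) (Phi : ℝ → ℝ) (c : ℝ) : ℝ :=
  th * mu * Phi c / zetafun lam th Phi c

lemma OUpsi_pos (lam th mu sig x : ℝ) (hlam : 0 < lam) (hth : 0 < th) :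
    0 < OUpsi lam th mu sig x := by
  set p : ℝ := lam / th - 1 with hp
  set b : ℝ := Real.sqrt (2 * th) / sig * (x - mu) with hb
  have hpgt : (-1 : ℝ) < p := by
    have : 0 < lam / th := div_pos hlam hth
    simp only [hp]; linarith
  set f : ℝ → ℝ := fun t =>
    t ^ p * Real.exp (-t ^ 2 / 2 + Real.sqrt (2 * th) / sig * t * (x - mu)) with hf
  have hmeas : AEStronglyMeasurable f (volume.restrict (Ioi (0:ℝ))) := by
    apply ContinuousOn.aestronglyMeasurable _ measurableSet_Ioi
    apply ContinuousOn.mul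
    · exact continuousOn_id.rpow_const (fun t ht => Or.inl (ne_of_gt ht))
    · exact Continuous.continuousOn (by continuity)
  have hint : IntegrableOn f (Ioi (0:ℝ)) := by
    have hg : IntegrableOn (fun t : ℝ => Real.exp (b ^ 2) * (t ^ p * Real.exp (-(1/4) * t ^ 2)))
        (Ioi (0:ℝ)) := by
      exact (integrableOn_rpow_mul_exp_neg_mul_sq (by norm_num) hpgt).const_mul _
    refine Integrable.mono' hg hmeas ?_
    filter_upwards [ae_restrict_mem measurableSet_Ioi] with t ht
    have ht0 : (0:ℝ) < t := ht
    have h1 : 0 ≤ t ^ p := Real.rpow_nonneg ht0.le p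
    have h2 : -t ^ 2 / 2 + Real.sqrt (2 * th) / sig * t * (x - mu) ≤ b ^ 2 + (-(1/4) * t ^ 2) := by
      have hsq : 0 ≤ (t / 2 - b) ^ 2 := sq_nonneg _
      have : Real.sqrt (2 * th) / sig * t * (x - mu) = b * t := by rw [hb]; ring
      nlinarith [hsq]
    have h3 : Real.exp (-t ^ 2 / 2 + Real.sqrt (2 * th) / sig * t * (x - mu))
        ≤ Real.exp (b ^ 2) * Real.exp (-(1/4) * t ^ 2) := by
      rw [← Real.exp_add]; exact Real.exp_le_exp.mpr h2
    have : f t = t ^ p * Real.exp (-t ^ 2 / 2 + Real.sqrt (2 * th) / sig * t * (x - mu)) := rfl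
    rw [Real.norm_eq_abs, abs_of_nonneg (mul_nonneg h1 (Real.exp_pos _).le)]
    have h4 := mul_le_mul_of_nonneg_left h3 h1
    linarith [h4, mul_comm (Real.exp (b ^ 2)) (t ^ p * Real.exp (-(1/4) * t ^ 2)),
      (by ring : t ^ p * (Real.exp (b ^ 2) * Real.exp (-(1/4) * t ^ 2))
        = Real.exp (b ^ 2) * (t ^ p * Real.exp (-(1/4) * t ^ 2)))]
  rw [OUpsi]
  rw [setIntegral_pos_iff_support_of_nonneg_ae]
  · have hsub : Ioi (0:ℝ) ⊆ (Function.support fun t : ℝ =>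
        t ^ (lam / th - 1) * Real.exp (-t ^ 2 / 2 + Real.sqrt (2 * th) / sig * t * (x - mu)))
        ∩ Ioi 0 := by
      intro t ht
      have ht0 : (0:ℝ) < t := ht
      exact ⟨Function.mem_support.mpr
        (mul_pos (Real.rpow_pos_of_pos ht0 _) (Real.exp_pos _)).ne', ht⟩
    exact lt_of_lt_of_le (by rw [Real.volume_Ioi]; simp) (measure_mono hsub)
  · filter_upwards [ae_restrict_mem measurableSet_Ioi] with t ht
    exact mul_nonneg (Real.rpow_nonneg (le_of_lt ht) p) (Real.exp_pos _).le
  · exact hint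

/-- assume `ζ < 0` on `[0,1)`. Then for every `c ∈ [0,1)`,
`k(c)/(λ+θ) - (ψ'(γ(c))/ψ(γ(c))) G(γ(c);c) < 0`; this quantity equals
`W_cx(γ(c),c) + 1`, so the second-order smooth fit fails at the repelling boundary. -/
theorem statement16 (lam th mu sig : ℝ)
    (hlam : 0 < lam) (hth : 0 < th) (hmu : 0 < mu) (hsig : 0 < sig)
    (Phi : ℝ → ℝ) (hPhiC2 : ContDiff ℝ 2 Phi)
    (hPhiconv : StrictConvexOn ℝ Set.univ Phi)
    (hPhi' : ∀ c ∈ Set.Icc (0:ℝ) 1, deriv Phi c < 0) (hPhi1 : Phi 1 = 0)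
    (hzeta : ∀ c ∈ Set.Ico (0:ℝ) 1, zetafun lam th Phi c < 0)
    (gamma : ℝ → ℝ)
    (hgamma : ∀ c ∈ Set.Ico (0:ℝ) 1,
      OUpsi lam th mu sig (gamma c)
        = deriv (OUpsi lam th mu sig) (gamma c) * (gamma c - xbar0fun lam th mu Phi c) ∧
      xbar0fun lam th mu Phi c < gamma c ∧
      ∀ y : ℝ, OUpsi lam th mu sig y
        = deriv (OUpsi lam th mu sig) y * (y - xbar0fun lam th mu Phi c) → y = gamma c)
    :
    ∀ c ∈ Set.Ico (0:ℝ) 1,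
      kfun lam th Phi c / (lam + th)
        - deriv (OUpsi lam th mu sig) (gamma c) / OUpsi lam th mu sig (gamma c)
          * Gfun lam th mu Phi (gamma c) c
      < 0 := by
  intro c hc
  obtain ⟨hc0, hc1⟩ := hc
  obtain ⟨heq, hlt, -⟩ := hgamma c ⟨hc0, hc1⟩
  set g := gamma c with hg
  set xb := xbar0fun lam th mu Phi c with hxb
  have hD : 0 < g - xb := sub_pos.mpr hlt
  have hps : 0 < OUpsi lam th mu sig g := OUpsi_pos lam th mu sig g hlam hth
  have hlt0 : 0 < lam + th := by linarith
  have hratio : deriv (OUpsi lam th mu sig) g / OUpsi lam th mu sig g = 1 / (g - xb) := by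
    have h' : deriv (OUpsi lam th mu sig) g = OUpsi lam th mu sig g / (g - xb) :=
      (eq_div_iff hD.ne').mpr heq.symm
    rw [h']
    field_simp
  have hΦd : DifferentiableAt ℝ Phi c :=
    (hPhiC2.differentiable (by norm_num)).differentiableAt
  have hkey : Phi c + deriv Phi c * (1 - c) < 0 := by
    have hs := hPhiconv.deriv_lt_slope (Set.mem_univ c) (Set.mem_univ 1) hc1 hΦd
    rw [slope_def_field, hPhi1] at hs
    have hpos : (0:ℝ) < 1 - c := by linarith
    rw [lt_div_iff₀ hpos] at hs
    nlinarith [hs]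
  have hζ : zetafun lam th Phi c < 0 := hzeta c ⟨hc0, hc1⟩
  have h1 : kfun lam th Phi c * Phi c + deriv Phi c * zetafun lam th Phi c < 0 := by
    have hid : kfun lam th Phi c * Phi c + deriv Phi c * zetafun lam th Phi c
        = (lam + th) * (Phi c + deriv Phi c * (1 - c)) := by
      unfold kfun zetafun; ring
    rw [hid]
    exact mul_neg_of_pos_of_neg hlt0 hkey
  have H : 0 < kfun lam th Phi c * xb + th * mu * deriv Phi c := by
    have hxbv : xb = th * mu * Phi c / zetafun lam th Phi c := rfl
    have hrw : kfun lam th Phi c * (th * mu * Phi c / zetafun lam th Phi c)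
          + th * mu * deriv Phi c
        = (th * mu * (kfun lam th Phi c * Phi c + deriv Phi c * zetafun lam th Phi c))
          / zetafun lam th Phi c := by
      field_simp [hζ.ne]
    rw [hxbv, hrw]
    exact div_pos_of_neg_of_neg (mul_neg_of_pos_of_neg (mul_pos hth hmu) h1) hζ
  have hfin : kfun lam th Phi c * (g - xb) < Gfun lam th mu Phi g c * (lam + th) := by
    have hG : Gfun lam th mu Phi g c * (lam + th) - kfun lam th Phi c * (g - xb)
        = th * mu * deriv Phi c + kfun lam th Phi c * xb := by
      unfold Gfun kfun
      field_simp
      ring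
    nlinarith [H, hG]
  rw [hratio, one_div_mul_eq_div]
  have := (div_lt_div_iff₀ hlt0 hD).mpr hfin
  linarith
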